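/- The KL-divergence formulation: for row-stochastic p with positive entries and target rows q_i = α_i/A_i, the S-InfoNCE loss satisfies L(p) = Σ_i A_i·[H(q_i) + D_KL(q_i ‖ p_i)], where p_i is the i-th row of p; hence L(p) − min L = Σ_i A_i D_KL(q_i ‖ p_i) ≥ 0. -/
import Mathlib

/-- Gibbs' inequality: weighted KL divergence is nonnegative. -/
lemma kl_nonneg {N : ℕ} (q p : Fin N → ℝ) (hq : ∀ j, 0 ≤ q j) (hp : ∀ j, 0 < p j)
    (hq1 : ∑ j, q j = 1) (hp1 : ∑ j, p j = 1) :
    0 ≤ ∑ j, q j * Real.log (q j / p j) := by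
  have key : ∀ j, q j - p j ≤ q j * Real.log (q j / p j) := by
    intro j
    rcases eq_or_lt_of_le (hq j) with h | h
    · simp [← h]; linarith [(hp j).le]
    · have hlog : Real.log (p j / q j) ≤ p j / q j - 1 :=
        Real.log_le_sub_one_of_pos (div_pos (hp j) h)
      have : Real.log (q j / p j) = - Real.log (p j / q j) := by
        rw [← Real.log_inv, inv_div]
      rw [this]
      have := mul_le_mul_of_nonneg_left hlog (hq j)
      have hqj : q j * (p j / q j - 1) = p j - q j := by field_simp
      nlinarith
  calc (0:ℝ) = ∑ j, (q j - p j) := by rw [Finset.sum_sub_distrib, hq1, hp1]; ring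
    _ ≤ _ := Finset.sum_le_sum fun j _ => key j

/-- KL-divergence formulation: with targets `q i j = α i j / A i`, the loss
decomposes as `L p = ∑ i, A i * (H(q i) + D_KL(q i ‖ p i))`; hence
`L p - min L = ∑ i, A i * D_KL(q i ‖ p i) ≥ 0`. -/
theorem loss_kl_decomposition {N : ℕ} (α : Fin N → Fin N → ℝ)
    (hα : ∀ i j, 0 ≤ α i j) (hA : ∀ i, 0 < ∑ k, α i k)
    (p : Fin N → Fin N → ℝ)
    (hp : ∀ i j, 0 < p i j) (hp1 : ∀ i, ∑ j, p i j = 1) :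
    ((-∑ i, ∑ j, α i j * Real.log (p i j))
        = ∑ i, (∑ k, α i k) *
            ((-∑ j, (α i j / ∑ k, α i k) * Real.log (α i j / ∑ k, α i k))
              + ∑ j, (α i j / ∑ k, α i k)
                  * Real.log ((α i j / ∑ k, α i k) / p i j))) ∧
    ((-∑ i, ∑ j, α i j * Real.log (p i j))
        - (-∑ i, ∑ j, α i j * Real.log (α i j / ∑ k, α i k))
      = ∑ i, (∑ k, α i k) *
          ∑ j, (α i j / ∑ k, α i k) * Real.log ((α i j / ∑ k, α i k) / p i j)) ∧
    (0 ≤ ∑ i, (∑ k, α i k) *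
          ∑ j, (α i j / ∑ k, α i k) * Real.log ((α i j / ∑ k, α i k) / p i j)) := by
  -- termwise identity
  have term : ∀ i j,
      (∑ k, α i k) * ((-(α i j / ∑ k, α i k) * Real.log (α i j / ∑ k, α i k))
        + (α i j / ∑ k, α i k) * Real.log ((α i j / ∑ k, α i k) / p i j))
      = -(α i j * Real.log (p i j)) := by
    intro i j
    set A := ∑ k, α i k with hAdef
    have hA0 : A ≠ 0 := (hA i).ne'
    rcases eq_or_lt_of_le (hα i j) with h | h
    · simp [← h]
    · have hq : (0:ℝ) < α i j / A := div_pos h (hA i)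
      rw [Real.log_div hq.ne' (hp i j).ne']
      field_simp
      ring
  have main : ∀ i,
      (∑ k, α i k) * ((-∑ j, (α i j / ∑ k, α i k) * Real.log (α i j / ∑ k, α i k))
        + ∑ j, (α i j / ∑ k, α i k) * Real.log ((α i j / ∑ k, α i k) / p i j))
      = -∑ j, α i j * Real.log (p i j) := by
    intro i
    rw [← Finset.sum_neg_distrib, ← Finset.sum_add_distrib, Finset.mul_sum,
      ← Finset.sum_neg_distrib]
    refine Finset.sum_congr rfl fun j _ => ?_
    have := term i j
    linarith [this]
  have second : ∀ i,
      (∑ k, α i k) * ∑ j, (α i j / ∑ k, α i k)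
        * Real.log ((α i j / ∑ k, α i k) / p i j)
      = (-∑ j, α i j * Real.log (p i j)) - (-∑ j, α i j * Real.log (α i j / ∑ k, α i k)) := by
    intro i
    set A := ∑ k, α i k with hAdef
    have hA0 : A ≠ 0 := (hA i).ne'
    rw [Finset.mul_sum]
    have : ∀ j, A * ((α i j / A) * Real.log ((α i j / A) / p i j))
        = (-(α i j * Real.log (p i j))) - (-(α i j * Real.log (α i j / A))) := by
      intro j
      rcases eq_or_lt_of_le (hα i j) with h | h
      · simp [← h]
      · have hq : (0:ℝ) < α i j / A := div_pos h (hA i)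
        rw [Real.log_div hq.ne' (hp i j).ne']
        field_simp
        ring
    rw [Finset.sum_congr rfl fun j _ => this j, Finset.sum_sub_distrib,
      Finset.sum_neg_distrib, Finset.sum_neg_distrib]
  refine ⟨?_, ?_, ?_⟩
  · rw [← Finset.sum_neg_distrib]
    exact Finset.sum_congr rfl fun i _ => (main i).symm
  · rw [neg_sub_neg, ← Finset.sum_sub_distrib]
    refine Finset.sum_congr rfl fun i _ => ?_
    have := second i
    linarith
  · refine Finset.sum_nonneg fun i _ => mul_nonneg (hA i).le ?_
    refine kl_nonneg _ _ (fun j => div_nonneg (hα i j) (hA i).le) (hp i) ?_ (hp1 i)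
    rw [← Finset.sum_div, div_self (hA i).ne']
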